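/- arXiv:1702.00810 — 3 statements merged into one kernel-verified Lean document; each statement's English description precedes it below -/
import Mathlib

section
/- Let S be a commutative semiring and M an S-semimodule. If Z_S(M) = p_1 ∪ ... ∪ p_n where each p_i ∈ Ass_S(M), then Z_{S[X]}(M[X]) = p_1[X] ∪ ... ∪ p_n[X], and each p_i[X] is an associated prime of the S[X]-semimodule M[X]. -/
/-- The convolution action of a polynomial `f ∈ S[X]` on a "polynomial"
`g ∈ M[X]` (represented as a finitely supported function `ℕ →₀ M`). -/
noncomputable def polyAct {S M : Type*} [CommSemiring S] [AddCommMonoid M] [Module S M]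
    (f : Polynomial S) (g : ℕ →₀ M) : ℕ →₀ M :=
  f.sum fun n s => g.sum fun k m => Finsupp.single (n + k) (s • m)

/-- The annihilator of an element `m` of an `S`-semimodule `M`, as an ideal of `S`. -/
def annElem (S : Type*) {M : Type*} [CommSemiring S] [AddCommMonoid M] [Module S M]
    (m : M) : Ideal S where
  carrier := {s | s • m = 0}
  zero_mem' := zero_smul S m
  add_mem' := fun {a b} ha hb => by
    have : (a + b) • m = a • m + b • m := add_smul a b m
    simp only [Set.mem_setOf_eq] at *
    rw [this, ha, hb, add_zero]
  smul_mem' := fun c s hs => by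
    simp only [Set.mem_setOf_eq, smul_eq_mul] at *
    rw [mul_smul, hs, smul_zero]

/-- For an ideal `p` of `S`, the ideal `p[X]` of `S[X]` of the polynomials all of
whose coefficients lie in `p`. -/
def coeffIdeal {S : Type*} [CommSemiring S] (p : Ideal S) : Ideal (Polynomial S) where
  carrier := {f | ∀ n, f.coeff n ∈ p}
  zero_mem' := fun n => by simp
  add_mem' := fun hf hg n => by
    rw [Polynomial.coeff_add]; exact p.add_mem (hf n) (hg n)
  smul_mem' := fun g f hf n => by
    rw [smul_eq_mul, Polynomial.coeff_mul]
    exact Ideal.sum_mem p fun c _ => p.mul_mem_left _ (hf c.2)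

/-!
If `f ∈ S[X]` kills some `g ≠ 0` in `M[X]`, McCoy's argument gives one `m ≠ 0` in `M` killed by
every coefficient of `f`: induct on the degree of `g`, replacing `g` by `f.coeff i • g` for the
largest `i` with `f.coeff i • g ≠ 0`. So all coefficients lie in `Ann(m) ⊆ Z_S(M) = ⋃ pᵢ`, and
prime avoidance, which only needs the primes to be subtractive, puts them into a single `pᵢ`.
Conversely `pᵢ[X] = Ann(m)[X]` is the annihilator of the constant `m ∈ M[X]`, and `p[X]` is prime
for a subtractive prime `p`: the product of the lowest coefficients of `f` and `g` outside `p`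
differs from a coefficient of `f * g` by an element of `p`.
-/

open Polynomial Finset

def Ideal.IsSubtractive {S : Type*} [Semiring S] (p : Ideal S) : Prop :=
  ∀ ⦃a b : S⦄, a ∈ p → a + b ∈ p → b ∈ p

section PrimeAvoidance

variable {S ι : Type*} [CommSemiring S]

theorem Ideal.exists_le_of_subset_biUnion {p : ι → Ideal S} (hp : ∀ i, (p i).IsPrime)
    (hsub : ∀ i, (p i).IsSubtractive) {I : Ideal S} (s : Finset ι)
    (hI : (I : Set S) ⊆ ⋃ i ∈ s, (p i : Set S)) : ∃ i ∈ s, I ≤ p i := by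
  classical
  induction s using Finset.strongInduction with
  | H s ih =>
  by_cases hred : ∃ a ∈ s, (I : Set S) ⊆ ⋃ i ∈ s.erase a, (p i : Set S)
  · obtain ⟨a, ha, hIa⟩ := hred
    obtain ⟨i, hi, hIi⟩ := ih _ (erase_ssubset ha) hIa
    exact ⟨i, mem_of_mem_erase hi, hIi⟩
  push Not at hred
  have hcover : ∀ x ∈ I, ∃ k ∈ s, x ∈ p k := fun x hx => by simpa using hI hx
  obtain ⟨a, ha, -⟩ := hcover 0 I.zero_mem
  obtain hsa | ⟨b, hb⟩ := (s.erase a).eq_empty_or_nonempty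
  · refine ⟨a, ha, fun x hx => ?_⟩
    obtain ⟨k, hk, hxk⟩ := hcover x hx
    obtain rfl : k = a := by
      by_contra hka
      simpa [hsa] using mem_erase.mpr ⟨hka, hk⟩
    exact hxk
  -- the cover is irredundant, so each `p c` contains some `x c ∈ I` lying in no other `p j`
  have hx : ∀ c, ∃ x ∈ I, c ∈ s → ∀ j ∈ s.erase c, x ∉ p j := fun c => by
    by_cases hc : c ∈ s
    · obtain ⟨x, hxI, hx⟩ := Set.not_subset.mp (hred c hc)
      exact ⟨x, hxI, fun _ j hj hxj => hx (Set.mem_biUnion hj hxj)⟩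
    · exact ⟨0, I.zero_mem, fun h => absurd h hc⟩
  choose x hxI hxp using hx
  have hxmem : ∀ c ∈ s, x c ∈ p c := fun c hc => by
    obtain ⟨k, hk, hxk⟩ := hcover _ (hxI c)
    by_cases hkc : k = c
    · exact hkc ▸ hxk
    · exact absurd hxk (hxp c hc k (mem_erase.mpr ⟨hkc, hk⟩))
  -- `x a + ∏_{j ≠ a} x j ∈ I` then lies in no `p k`
  set y := ∏ j ∈ s.erase a, x j
  have hyI : y ∈ I := I.mem_of_dvd (dvd_prod_of_mem x hb) (hxI b)
  obtain ⟨k, hk, hxy⟩ := hcover _ (I.add_mem (hxI a) hyI)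
  exfalso
  by_cases hka : k = a
  · subst hka
    have : y ∈ p k := hsub k (hxmem k hk) hxy
    obtain ⟨j, hj, hxj⟩ := (hp k).prod_mem_iff.mp this
    exact hxp j (mem_of_mem_erase hj) k (mem_erase.mpr ⟨(ne_of_mem_erase hj).symm, hk⟩) hxj
  · have hyk : y ∈ p k :=
      (p k).mem_of_dvd (dvd_prod_of_mem x (mem_erase.mpr ⟨hka, hk⟩)) (hxmem k hk)
    exact hxp a ha k (mem_erase.mpr ⟨hka, hk⟩) (hsub k hyk (add_comm (x a) y ▸ hxy))

end PrimeAvoidance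

section CoeffIdeal

variable {S : Type*} [CommSemiring S]

@[simp]
theorem mem_coeffIdeal {p : Ideal S} {f : S[X]} : f ∈ coeffIdeal p ↔ ∀ n, f.coeff n ∈ p :=
  Iff.rfl

theorem coeff_mul_coeff_mem_of_coeff_mul_mem {p : Ideal S} (hp : p.IsSubtractive) {f g : S[X]}
    {i j : ℕ} (hf : ∀ a < i, f.coeff a ∈ p) (hg : ∀ b < j, g.coeff b ∈ p)
    (hfg : (f * g).coeff (i + j) ∈ p) : f.coeff i * g.coeff j ∈ p := by
  have hij : (i, j) ∈ antidiagonal (i + j) := HasAntidiagonal.mem_antidiagonal.mpr rfl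
  rw [coeff_mul, ← add_sum_erase _ _ hij, add_comm] at hfg
  refine hp (sum_mem fun x hx => ?_) hfg
  obtain ⟨hne, hx⟩ := mem_erase.mp hx
  rw [HasAntidiagonal.mem_antidiagonal] at hx
  rcases lt_trichotomy x.1 i with h | h | h
  · exact p.mul_mem_right _ (hf _ h)
  · exact absurd (Prod.ext h (by omega)) hne
  · exact p.mul_mem_left _ (hg _ (by omega))

theorem coeffIdeal_isPrime {p : Ideal S} (hp : p.IsPrime) (hsub : p.IsSubtractive) :
    (coeffIdeal p).IsPrime := by
  classical
  refine Ideal.isPrime_iff.mpr ⟨fun h => hp.ne_top ?_, fun {f g} hfg => ?_⟩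
  · have h1 : (1 : S[X]) ∈ coeffIdeal p := h ▸ Submodule.mem_top
    exact (Ideal.eq_top_iff_one p).mpr (by simpa using h1 0)
  by_contra! hfg'
  obtain ⟨hf, hg⟩ : (∃ i, f.coeff i ∉ p) ∧ ∃ j, g.coeff j ∉ p := by simpa using hfg'
  have key := coeff_mul_coeff_mem_of_coeff_mul_mem hsub
    (fun a ha => not_not.mp (Nat.find_min hf ha)) (fun b hb => not_not.mp (Nat.find_min hg hb))
    (hfg (Nat.find hf + Nat.find hg))
  rcases hp.mem_or_mem key with h | h
  exacts [Nat.find_spec hf h, Nat.find_spec hg h]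

theorem exists_max_coeff_smul_ne_zero {N : Type*} [AddCommMonoid N] [Module S N]
    {f : S[X]} {x : N} (h : ∃ n, f.coeff n • x ≠ 0) :
    ∃ i, f.coeff i • x ≠ 0 ∧ ∀ k, i < k → f.coeff k • x = 0 := by
  classical
  obtain ⟨n, hn⟩ := h
  have hdeg : ∀ k, f.natDegree < k → f.coeff k • x = 0 := fun k hk => by
    rw [coeff_eq_zero_of_natDegree_lt hk, zero_smul]
  refine ⟨Nat.findGreatest (fun i => f.coeff i • x ≠ 0) f.natDegree,
    Nat.findGreatest_spec (P := fun i => f.coeff i • x ≠ 0) (not_lt.mp fun h => hn (hdeg _ h)) hn,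
    fun k hk => ?_⟩
  by_contra hk'
  rcases le_or_gt k f.natDegree with hle | hlt
  exacts [Nat.findGreatest_is_greatest hk hle hk', hk' (hdeg k hlt)]

end CoeffIdeal

section PolyAct

variable {S M : Type*} [CommSemiring S] [AddCommMonoid M] [Module S M]

theorem polyAct_apply (f : S[X]) (g : ℕ →₀ M) (N : ℕ) :
    polyAct f g N = ∑ x ∈ antidiagonal N, f.coeff x.1 • g x.2 := by
  classical
  have h : polyAct f g N = ∑ x ∈ f.support ×ˢ g.support,
      if x.1 + x.2 = N then f.coeff x.1 • g x.2 else 0 := by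
    simp_rw [polyAct, Polynomial.sum, Finsupp.sum, Finset.sum_apply', Finsupp.single_apply,
      Finset.sum_product]
  rw [h, ← sum_filter]
  refine sum_subset (fun x hx => HasAntidiagonal.mem_antidiagonal.mpr (mem_filter.mp hx).2)
    fun x hx hx' => ?_
  rw [HasAntidiagonal.mem_antidiagonal] at hx
  by_cases hf : x.1 ∈ f.support
  · have hg : x.2 ∉ g.support := fun hg => hx' (mem_filter.mpr ⟨mem_product.mpr ⟨hf, hg⟩, hx⟩)
    rw [Finsupp.notMem_support_iff.mp hg, smul_zero]
  · rw [Polynomial.notMem_support_iff.mp hf, zero_smul]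

theorem polyAct_smul (f : S[X]) (s : S) (g : ℕ →₀ M) :
    polyAct f (s • g) = s • polyAct f g := by
  ext N
  simp only [Finsupp.smul_apply, polyAct_apply, smul_sum]
  exact sum_congr rfl fun x _ => smul_comm _ _ _

theorem polyAct_single_zero_apply (f : S[X]) (m : M) (N : ℕ) :
    polyAct f (Finsupp.single 0 m) N = f.coeff N • m := by
  rw [polyAct_apply, sum_eq_single (N, 0)]
  · simp
  · intro x hx hne
    rw [HasAntidiagonal.mem_antidiagonal] at hx
    have hx2 : 0 ≠ x.2 := fun h => hne (Prod.ext (by omega) h.symm)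
    rw [Finsupp.single_apply, if_neg hx2, smul_zero]
  · simp

theorem polyAct_apply_add_of_forall_lt {f : S[X]} {g : ℕ →₀ M} {i e : ℕ}
    (hf : ∀ k, i < k → f.coeff k • g = 0) (hg : ∀ k, e < k → g k = 0) :
    polyAct f g (i + e) = f.coeff i • g e := by
  rw [polyAct_apply, sum_eq_single (i, e)]
  · intro x hx hne
    rw [HasAntidiagonal.mem_antidiagonal] at hx
    rcases lt_trichotomy x.2 e with h | h | h
    · simpa using DFunLike.congr_fun (hf x.1 (by omega)) x.2
    · exact absurd (Prod.ext (by omega) h) hne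
    · rw [hg _ h, smul_zero]
  · simp

theorem annElem_isSubtractive (m : M) : (annElem S m).IsSubtractive := fun a b ha hab => by
  change (a + b) • m = 0 at hab
  rwa [add_smul, show a • m = 0 from ha, zero_add] at hab

theorem annElem_eq_top_iff {m : M} : annElem S m = ⊤ ↔ m = 0 := by
  rw [Ideal.eq_top_iff_one]
  change (1 : S) • m = 0 ↔ m = 0
  rw [one_smul]

theorem mem_coeffIdeal_annElem_iff {f : S[X]} {m : M} :
    f ∈ coeffIdeal (annElem S m) ↔ polyAct f (Finsupp.single 0 m) = 0 := by
  simp only [mem_coeffIdeal, Finsupp.ext_iff, polyAct_single_zero_apply, Finsupp.coe_zero,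
    Pi.zero_apply]
  rfl

theorem exists_ne_zero_forall_coeff_smul_eq_zero {f : S[X]} {g : ℕ →₀ M} (hg : g ≠ 0)
    (hfg : polyAct f g = 0) : ∃ m : M, m ≠ 0 ∧ ∀ n, f.coeff n • m = 0 := by
  classical
  suffices ∀ e (g : ℕ →₀ M), (∀ k, e ≤ k → g k = 0) → g ≠ 0 → polyAct f g = 0 →
      ∃ m : M, m ≠ 0 ∧ ∀ n, f.coeff n • m = 0 from
    have ⟨e, he⟩ := g.support.exists_nat_subset_range
    this e g (fun k hk => Finsupp.notMem_support_iff.mp fun hmem =>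
      (mem_range.mp (he hmem)).not_ge hk) hg hfg
  intro e
  induction e with
  | zero => exact fun g hg hg0 _ => absurd (Finsupp.ext fun k => hg k k.zero_le) hg0
  | succ e ih =>
    intro g hg hg0 hfg
    by_cases hkill : ∀ n, f.coeff n • g = 0
    · obtain ⟨k, hk⟩ := DFunLike.ne_iff.mp hg0
      exact ⟨g k, hk, fun n => by simpa using DFunLike.congr_fun (hkill n) k⟩
    push Not at hkill
    obtain ⟨i, hi, hmax⟩ := exists_max_coeff_smul_ne_zero hkill
    -- `f` also kills `f.coeff i • g ≠ 0`, whose coefficient in degree `e` is the coefficient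
    -- of `polyAct f g` in degree `i + e`, hence zero: induct on the degree bound
    refine ih (f.coeff i • g) (fun k hk => ?_) hi (by rw [polyAct_smul, hfg, smul_zero])
    rcases hk.eq_or_lt with rfl | hk
    · have := polyAct_apply_add_of_forall_lt hmax hg
      rw [hfg] at this
      exact this.symm
    · simp [hg k hk]

end PolyAct

/-- If `Z_S(M) = p₁ ∪ ... ∪ pₙ` with each `pᵢ ∈ Ass_S(M)`, then
`Z_{S[X]}(M[X]) = p₁[X] ∪ ... ∪ pₙ[X]`, and each `pᵢ[X]` is an associated prime of
the `S[X]`-semimodule `M[X]`. -/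
theorem zeroDivisors_polyModule {S M : Type*} [CommSemiring S] [AddCommMonoid M] [Module S M]
    {n : ℕ} (p : Fin n → Ideal S)
    (hass : ∀ i, (p i).IsPrime ∧ ∃ m : M, p i = annElem S m)
    (hZ : {s : S | ∃ m : M, m ≠ 0 ∧ s • m = 0} = ⋃ i, (p i : Set S)) :
    {f : Polynomial S | ∃ g : ℕ →₀ M, g ≠ 0 ∧ polyAct f g = 0} =
        (⋃ i, (coeffIdeal (p i) : Set (Polynomial S))) ∧
      ∀ i, (coeffIdeal (p i)).IsPrime ∧
        ∃ g : ℕ →₀ M, ∀ f : Polynomial S, f ∈ coeffIdeal (p i) ↔ polyAct f g = 0 := by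
  have hsub : ∀ i, (p i).IsSubtractive := fun i => by
    obtain ⟨-, m, hm⟩ := hass i
    exact hm ▸ annElem_isSubtractive m
  refine ⟨Set.ext fun f => ⟨?_, ?_⟩, fun i => ?_⟩
  · rintro ⟨g, hg, hfg⟩
    obtain ⟨m, hm, hfm⟩ := exists_ne_zero_forall_coeff_smul_eq_zero hg hfg
    have hcover : (annElem S m : Set S) ⊆ ⋃ i ∈ univ, (p i : Set S) := fun s hs => by
      simpa [← hZ] using ⟨m, hm, hs⟩
    obtain ⟨i, -, hi⟩ := Ideal.exists_le_of_subset_biUnion (fun i => (hass i).1) hsub _ hcover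
    exact Set.mem_iUnion.mpr ⟨i, fun n => hi (hfm n)⟩
  · intro hf
    obtain ⟨i, hfi⟩ := Set.mem_iUnion.mp hf
    obtain ⟨hp, m, hm⟩ := hass i
    rw [hm] at hp hfi
    exact ⟨_, Finsupp.single_ne_zero.mpr (annElem_eq_top_iff.not.mp hp.ne_top),
      mem_coeffIdeal_annElem_iff.mp hfi⟩
  · obtain ⟨hp, m, hm⟩ := hass i
    rw [hm] at hp ⊢
    exact ⟨coeffIdeal_isPrime hp (annElem_isSubtractive m), _, fun f => mem_coeffIdeal_annElem_iff⟩
end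

section
/- Let S be a commutative semiring. The following are equivalent: (1) c(fg) ⊆ c(f)c(g) ⊆ √(c(fg)) for all f, g ∈ S[X]; (2) √I is a subtractive ideal for every ideal I of S; (3) every prime ideal of S is subtractive. -/
/-- The content of a polynomial `f ∈ S[X]`: the ideal of `S` generated by the
coefficients of `f`. -/
noncomputable def polyContent {S : Type*} [CommSemiring S] (f : Polynomial S) : Ideal S :=
  Ideal.span (Set.range f.coeff)

/-- An ideal `I` of a semiring is subtractive if `a + b ∈ I` and `a ∈ I` imply `b ∈ I`. -/
def Subtractive {S : Type*} [CommSemiring S] (I : Ideal S) : Prop :=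
  ∀ a b : S, a + b ∈ I → a ∈ I → b ∈ I

/-!
Modulo a subtractive prime `p` the usual Gauss-lemma argument works: if `i` and `j` are the
first indices with `f_i, g_j ∉ p`, then the coefficient of `X^(i+j)` in `fg` is `f_i g_j` plus
an element of `p`, and subtractivity puts `f_i g_j` in `p`. Hence every prime containing
`c(fg)` contains `c(f)` or `c(g)`, which gives `c(f)c(g) ⊆ √c(fg)`; as radicals are
intersections of primes, (2) and (3) are equivalent.

Conversely, if `a + b, a ∈ J` for a radical ideal `J`, the polynomials `f = a + bX + aX²` and
`g = a + bX + bX²` have all coefficients of `fg` in `J` while `b² ∈ c(f)c(g)`, so weak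
Gaussianity forces `b ∈ J`.
-/

open Polynomial Finset.HasAntidiagonal

section

variable {S : Type*} [CommSemiring S]

theorem coeff_mem_polyContent (f : S[X]) (n : ℕ) : f.coeff n ∈ polyContent f :=
  Ideal.subset_span ⟨n, rfl⟩

theorem polyContent_le_iff {f : S[X]} {I : Ideal S} :
    polyContent f ≤ I ↔ ∀ n, f.coeff n ∈ I := by
  rw [polyContent, Ideal.span_le, Set.range_subset_iff]
  rfl

theorem polyContent_mul_le (f g : S[X]) :
    polyContent (f * g) ≤ polyContent f * polyContent g :=
  polyContent_le_iff.2 fun n => by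
    rw [coeff_mul]
    exact Ideal.sum_mem _ fun x _ =>
      Ideal.mul_mem_mul (coeff_mem_polyContent f x.1) (coeff_mem_polyContent g x.2)

theorem subtractive_sInf {s : Set (Ideal S)} (hs : ∀ I ∈ s, Subtractive I) :
    Subtractive (sInf s) := by
  intro a b hab ha
  rw [Submodule.mem_sInf] at hab ha ⊢
  exact fun I hI => hs I hI a b (hab I hI) (ha I hI)

theorem subtractive_radical_iff_subtractive_prime :
    (∀ I : Ideal S, Subtractive I.radical) ↔ ∀ p : Ideal S, p.IsPrime → Subtractive p := by
  refine ⟨fun h p hp => hp.radical ▸ h p, fun h I => ?_⟩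
  rw [Ideal.radical_eq_sInf]
  exact subtractive_sInf fun p hp => h p hp.2

theorem exists_coeff_mul_add_eq_add_mul {p : Ideal S} {f g : S[X]} {i j : ℕ}
    (hf : ∀ k < i, f.coeff k ∈ p) (hg : ∀ k < j, g.coeff k ∈ p) :
    ∃ r ∈ p, (f * g).coeff (i + j) = r + f.coeff i * g.coeff j := by
  have hij : (i, j) ∈ antidiagonal (i + j) := mem_antidiagonal.2 rfl
  refine ⟨∑ x ∈ (antidiagonal (i + j)).erase (i, j), f.coeff x.1 * g.coeff x.2,
    Ideal.sum_mem _ fun x hx => ?_, by rw [coeff_mul, Finset.sum_erase_add _ _ hij]⟩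
  rw [Finset.mem_erase, mem_antidiagonal] at hx
  rcases lt_or_ge x.1 i with h | h
  · exact p.mul_mem_right _ (hf _ h)
  · have hj : x.2 < j := by
      by_contra!
      exact hx.1 (Prod.ext (by omega) (by omega))
    exact p.mul_mem_left _ (hg _ hj)

theorem Subtractive.polyContent_le_or_le {p : Ideal S} (hsub : Subtractive p) (hp : p.IsPrime)
    {f g : S[X]} (hfg : polyContent (f * g) ≤ p) :
    polyContent f ≤ p ∨ polyContent g ≤ p := by
  classical
  simp only [polyContent_le_iff] at hfg ⊢
  by_contra! ⟨⟨i, hi⟩, ⟨j, hj⟩⟩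
  have hf : ∃ i, f.coeff i ∉ p := ⟨i, hi⟩
  have hg : ∃ j, g.coeff j ∉ p := ⟨j, hj⟩
  obtain ⟨r, hr, hcoeff⟩ := exists_coeff_mul_add_eq_add_mul (p := p)
    (fun k hk => not_not.1 (Nat.find_min hf hk)) (fun k hk => not_not.1 (Nat.find_min hg hk))
  have hprod := hsub _ _ (hcoeff ▸ hfg _) hr
  exact (hp.mem_or_mem hprod).elim (Nat.find_spec hf) (Nat.find_spec hg)

theorem polyContent_mul_le_radical (h : ∀ p : Ideal S, p.IsPrime → Subtractive p) (f g : S[X]) :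
    polyContent f * polyContent g ≤ (polyContent (f * g)).radical := by
  rw [Ideal.radical_eq_sInf]
  refine le_sInf fun p ⟨hle, hp⟩ => ?_
  rcases (h p hp).polyContent_le_or_le hp hle with hf | hg
  · exact Ideal.mul_le_left.trans hf
  · exact Ideal.mul_le_right.trans hg

theorem Ideal.IsRadical.subtractive_of_weakGaussian
    (h : ∀ f g : S[X], polyContent f * polyContent g ≤ (polyContent (f * g)).radical)
    {J : Ideal S} (hJ : J.IsRadical) : Subtractive J := by
  intro a b hab ha
  let f : S[X] := C a + C b * X + C a * X ^ 2
  let g : S[X] := C a + C b * X + C b * X ^ 2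
  have hfg : f * g = C (a * a) + C (a * b + a * b) * X + C (a * a + (a + b) * b) * X ^ 2 +
      C ((a + b) * b) * X ^ 3 + C (a * b) * X ^ 4 := by
    simp only [f, g, map_add, map_mul]
    ring
  have hcontent : polyContent (f * g) ≤ J := by
    refine polyContent_le_iff.2 fun n => ?_
    have haa := J.mul_mem_right a ha
    have habb := J.mul_mem_right b hab
    have hb := J.mul_mem_right b ha
    rw [hfg]
    simp only [coeff_add, coeff_C_mul_X_pow, coeff_C_mul_X, coeff_C]
    rcases n with _ | _ | _ | _ | _ | n <;> simp [haa, habb, hb, J.add_mem]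
  have hbb : b * b ∈ polyContent f * polyContent g :=
    Ideal.mul_mem_mul (by simpa [f] using coeff_mem_polyContent f 1)
      (by simpa [g] using coeff_mem_polyContent g 1)
  exact hJ ⟨2, pow_two b ▸ hJ (Ideal.radical_mono hcontent (h f g hbb))⟩

end

/-- For a commutative semiring `S` the following are equivalent:
(1) `c(fg) ⊆ c(f)c(g) ⊆ √c(fg)` for all `f, g ∈ S[X]` (`S` is weak Gaussian);
(2) the radical of every ideal of `S` is subtractive;
(3) every prime ideal of `S` is subtractive. -/
theorem weakGaussian_tfae {S : Type*} [CommSemiring S] :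
    ((∀ f g : Polynomial S,
        polyContent (f * g) ≤ polyContent f * polyContent g ∧
          polyContent f * polyContent g ≤ (polyContent (f * g)).radical) ↔
      (∀ I : Ideal S, Subtractive I.radical)) ∧
    ((∀ I : Ideal S, Subtractive I.radical) ↔
      (∀ p : Ideal S, p.IsPrime → Subtractive p)) := by
  have h23 : (∀ I : Ideal S, Subtractive I.radical) ↔ ∀ p : Ideal S, p.IsPrime → Subtractive p :=
    subtractive_radical_iff_subtractive_prime
  refine ⟨⟨fun h I => ?_, fun h f g => ⟨polyContent_mul_le f g, ?_⟩⟩, h23⟩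
  · exact (Ideal.radical_isRadical I).subtractive_of_weakGaussian fun f g => (h f g).2
  · exact polyContent_mul_le_radical (h23.1 h) f g
end

section
/- Let S be a commutative semiring in which every ideal is subtractive. Then the Dedekind–Mertens content formula holds in the polynomial semiring S[X]: for all f, g ∈ S[X] there exists m ∈ ℕ such that c(f)^{m+1} c(g) = c(f)^m c(fg). -/
/-! Let `a` be the leading coefficient of `f`, of degree `d`, and `f = a X^d + f'`. Subtracting
from the coefficient of `X^(d+j)` in `f g` all the products `f_i g_l` with `l > j` (which
subtractivity allows) peels off the coefficients of `g` from the top: `a^(k+1) g_j ∈ c(f)^k c(fg)`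
whenever `deg g ≤ j + k`, so `(a)^(n+1) c(g) ⊆ c(f)^n c(fg)` with `n = deg g`. Subtractivity also
gives `c(f'g) ⊆ c(fg) + (a) c(g)`. By induction on the number of terms of `f`,
`c(f')^(k+1) c(g) ⊆ c(f')^k c(f'g)` for some `k`. Expanding `c(f)^N = ((a) + c(f'))^N`, each term
contains a high power of `(a)` or of `c(f')` and is absorbed by one of the two inclusions.
The reverse inclusion follows from `c(fg) ⊆ c(f) c(g)`. -/

namespace Ideal

variable {S : Type*} [CommSemiring S]

def IsSubtractive_s14 (I : Ideal S) : Prop :=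
  ∀ a b, a + b ∈ I → a ∈ I → b ∈ I

theorem add_pow_add_add_one_le (A B : Ideal S) (p q : ℕ) :
    (A + B) ^ (p + q + 1) ≤ A ^ (p + 1) * (A + B) ^ q + B ^ (q + 1) * (A + B) ^ p := by
  rw [add_pow, sum_eq_sup]
  refine Finset.sup_le fun i hi => ?_
  have hi : i ≤ p + q + 1 := Nat.lt_succ_iff.mp (Finset.mem_range.mp hi)
  refine mul_le_left.trans ?_
  rcases le_or_gt (p + 1) i with h | h
  · obtain ⟨i, rfl⟩ := Nat.exists_eq_add_of_le h
    calc A ^ (p + 1 + i) * B ^ (p + q + 1 - (p + 1 + i))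
        = A ^ (p + 1) * (A ^ i * B ^ (q - i)) := by
          rw [show p + q + 1 - (p + 1 + i) = q - i by omega, pow_add, mul_assoc]
      _ ≤ A ^ (p + 1) * ((A + B) ^ i * (A + B) ^ (q - i)) := by
          gcongr <;> simp
      _ = A ^ (p + 1) * (A + B) ^ q := by rw [← pow_add, Nat.add_sub_cancel' (by omega)]
      _ ≤ _ := le_self_add
  · calc A ^ i * B ^ (p + q + 1 - i)
        = B ^ (q + 1) * (A ^ i * B ^ (p - i)) := by
          rw [show p + q + 1 - i = q + 1 + (p - i) by omega, pow_add]; ring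
      _ ≤ B ^ (q + 1) * ((A + B) ^ i * (A + B) ^ (p - i)) := by
          gcongr <;> simp
      _ = B ^ (q + 1) * (A + B) ^ p := by rw [← pow_add, Nat.add_sub_cancel' (by omega)]
      _ ≤ _ := le_add_self

variable {A B C D E : Ideal S} {k n : ℕ}

theorem pow_add_add_one_mul_le (h : B ^ (k + 1) * C ≤ (A + B) ^ k * D + A * B ^ k * C)
    (j : ℕ) :
    B ^ (k + j + 1) * C ≤ (A + B) ^ (k + j) * D + A ^ (j + 1) * B ^ k * C := by
  induction j with
  | zero => simpa using h
  | succ j ih =>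
    calc B ^ (k + (j + 1) + 1) * C = B * (B ^ (k + j + 1) * C) := by ring
      _ ≤ B * ((A + B) ^ (k + j) * D + A ^ (j + 1) * B ^ k * C) := by gcongr
      _ = B * (A + B) ^ (k + j) * D + A ^ (j + 1) * (B ^ (k + 1) * C) := by ring
      _ ≤ (A + B) * (A + B) ^ (k + j) * D +
            A ^ (j + 1) * ((A + B) ^ k * D + A * B ^ k * C) := by
          gcongr
          exact le_add_self
      _ = (A + B) ^ (k + (j + 1)) * D + A ^ (j + 1) * (A + B) ^ k * D +
            A ^ (j + 1 + 1) * B ^ k * C := by ring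
      _ ≤ (A + B) ^ (k + (j + 1)) * D + (A + B) ^ (k + (j + 1)) * D +
            A ^ (j + 1 + 1) * B ^ k * C := by
          gcongr
          calc A ^ (j + 1) * (A + B) ^ k ≤ (A + B) ^ (j + 1) * (A + B) ^ k := by
                gcongr; exact le_self_add
            _ = (A + B) ^ (k + (j + 1)) := by ring
      _ = _ := by rw [add_idem]

theorem add_pow_add_one_mul_le (hA : A ^ (n + 1) * C ≤ (A + B) ^ n * D)
    (hB : B ^ (k + 1) * C ≤ B ^ k * E) (hE : E ≤ D + A * C) :
    (A + B) ^ (n + (k + n) + 1) * C ≤ (A + B) ^ (n + (k + n)) * D := by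
  have hB' : B ^ (k + n + 1) * C ≤ (A + B) ^ (k + n) * D := by
    refine (pow_add_add_one_mul_le ?_ n).trans (sup_le le_rfl ?_)
    · calc B ^ (k + 1) * C ≤ B ^ k * (D + A * C) := hB.trans (by gcongr)
        _ = B ^ k * D + A * B ^ k * C := by ring
        _ ≤ (A + B) ^ k * D + A * B ^ k * C := by gcongr; exact le_add_self
    · calc A ^ (n + 1) * B ^ k * C = B ^ k * (A ^ (n + 1) * C) := by ring
        _ ≤ (A + B) ^ k * ((A + B) ^ n * D) := by gcongr; exact le_add_self
        _ = (A + B) ^ (k + n) * D := by ring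
  calc (A + B) ^ (n + (k + n) + 1) * C
      ≤ (A ^ (n + 1) * (A + B) ^ (k + n) + B ^ (k + n + 1) * (A + B) ^ n) * C := by
        gcongr; exact add_pow_add_add_one_le A B n (k + n)
    _ = (A + B) ^ (k + n) * (A ^ (n + 1) * C) + (A + B) ^ n * (B ^ (k + n + 1) * C) := by
        ring
    _ ≤ (A + B) ^ (k + n) * ((A + B) ^ n * D) + (A + B) ^ n * ((A + B) ^ (k + n) * D) := by
        gcongr
    _ = (A + B) ^ (n + (k + n)) * D := by rw [← mul_assoc, ← pow_add, ← mul_assoc, ← pow_add,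
          add_comm n (k + n), add_idem]

end Ideal

namespace Polynomial

open Ideal

variable {S : Type*} [CommSemiring S]

theorem contentIdeal_le_iff {p : S[X]} {I : Ideal S} :
    p.contentIdeal ≤ I ↔ ∀ n, p.coeff n ∈ I := by
  refine ⟨fun h n => h (coeff_mem_contentIdeal p n), fun h => ?_⟩
  rw [contentIdeal_def, span_le]
  intro c hc
  obtain ⟨n, -, rfl⟩ := mem_coeffs_iff.mp hc
  exact h n

theorem span_singleton_mul_contentIdeal_le_iff {x : S} {p : S[X]} {I : Ideal S} :
    span {x} * p.contentIdeal ≤ I ↔ ∀ n, x * p.coeff n ∈ I := by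
  refine ⟨fun h n => h (mul_mem_mul (mem_span_singleton_self x) (coeff_mem_contentIdeal p n)),
    fun h => span_singleton_mul_le_iff.mpr fun z hz => ?_⟩
  have : p.contentIdeal ≤ I.colon {x} :=
    contentIdeal_le_iff.mpr fun n =>
      Submodule.mem_colon_singleton.mpr (by simpa [mul_comm] using h n)
  simpa [mul_comm] using Submodule.mem_colon_singleton.mp (this hz)

theorem contentIdeal_add_le (p q : S[X]) :
    (p + q).contentIdeal ≤ p.contentIdeal + q.contentIdeal :=
  contentIdeal_le_iff.mpr fun n => by
    rw [coeff_add]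
    exact Submodule.add_mem_sup (coeff_mem_contentIdeal p n) (coeff_mem_contentIdeal q n)

theorem contentIdeal_le_of_isSubtractive {p q : S[X]}
    (h : ((p + q).contentIdeal + q.contentIdeal).IsSubtractive_s14) :
    p.contentIdeal ≤ (p + q).contentIdeal + q.contentIdeal :=
  contentIdeal_le_iff.mpr fun n => h _ _ (by
    rw [← coeff_add, add_comm q]
    exact Submodule.mem_sup_left (coeff_mem_contentIdeal _ n))
    (Submodule.mem_sup_right (coeff_mem_contentIdeal q n))

theorem contentIdeal_eq_span_leadingCoeff_add (f : S[X]) :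
    f.contentIdeal = span {f.leadingCoeff} + f.eraseLead.contentIdeal := by
  refine le_antisymm ?_ (sup_le ?_ ?_)
  · conv_lhs => rw [← eraseLead_add_monomial_natDegree_leadingCoeff f]
    rw [add_comm _ f.eraseLead.contentIdeal, ← contentIdeal_monomial f.natDegree]
    exact contentIdeal_add_le _ _
  · exact (span_singleton_le_iff_mem _).mpr (coeff_mem_contentIdeal f _)
  · refine contentIdeal_le_iff.mpr fun n => ?_
    rw [eraseLead_coeff]
    split_ifs
    exacts [zero_mem _, coeff_mem_contentIdeal f n]

theorem mul_leadingCoeff_mul_coeff_mem {T : Ideal S} (hT : T.IsSubtractive_s14) {f g : S[X]}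
    {r : S} {j : ℕ} (h₁ : r * (f * g).coeff (f.natDegree + j) ∈ T)
    (h₂ : ∀ i l, j < l → r * (f.coeff i * g.coeff l) ∈ T) :
    r * (f.leadingCoeff * g.coeff j) ∈ T := by
  classical
  have hmem : (f.natDegree, j) ∈ Finset.HasAntidiagonal.antidiagonal (f.natDegree + j) :=
    Finset.HasAntidiagonal.mem_antidiagonal.mpr rfl
  rw [coeff_mul, ← Finset.add_sum_erase _ _ hmem, mul_add, Finset.mul_sum, add_comm] at h₁
  refine hT _ _ h₁ (sum_mem _ fun x hx => ?_)
  obtain ⟨hne, hx⟩ := Finset.mem_erase.mp hx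
  rw [Finset.HasAntidiagonal.mem_antidiagonal] at hx
  rcases lt_or_ge j x.2 with hj | hj
  · exact h₂ _ _ hj
  · have : f.natDegree < x.1 := by
      by_contra!
      exact hne (Prod.ext (by omega) (by omega))
    rw [coeff_eq_zero_of_natDegree_lt this, zero_mul, mul_zero]
    exact zero_mem _

theorem leadingCoeff_pow_succ_mul_coeff_mem (hS : ∀ I : Ideal S, I.IsSubtractive_s14) (f g : S[X])
    {j k : ℕ} (h : g.natDegree ≤ j + k) :
    f.leadingCoeff ^ (k + 1) * g.coeff j ∈ f.contentIdeal ^ k * (f * g).contentIdeal := by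
  have step : ∀ {j k : ℕ}, (∀ i l, j < l → f.leadingCoeff ^ k * (f.coeff i * g.coeff l) ∈
      f.contentIdeal ^ k * (f * g).contentIdeal) →
      f.leadingCoeff ^ (k + 1) * g.coeff j ∈ f.contentIdeal ^ k * (f * g).contentIdeal := by
    intro j k h₂
    rw [pow_succ, mul_assoc]
    exact mul_leadingCoeff_mul_coeff_mem (hS _) (mul_mem_mul
      (pow_mem_pow (coeff_mem_contentIdeal f _) k) (coeff_mem_contentIdeal _ _)) h₂
  induction k generalizing j with
  | zero =>
    refine step fun i l hl => ?_
    rw [coeff_eq_zero_of_natDegree_lt (p := g) (by omega), mul_zero, mul_zero]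
    exact zero_mem _
  | succ k ih =>
    refine step fun i l hl => ?_
    rw [mul_left_comm, pow_succ', mul_assoc]
    exact mul_mem_mul (coeff_mem_contentIdeal f i) (ih (by omega))

theorem span_leadingCoeff_pow_mul_contentIdeal_le (hS : ∀ I : Ideal S, I.IsSubtractive_s14)
    (f g : S[X]) :
    span {f.leadingCoeff} ^ (g.natDegree + 1) * g.contentIdeal ≤
      f.contentIdeal ^ g.natDegree * (f * g).contentIdeal := by
  rw [span_singleton_pow, span_singleton_mul_contentIdeal_le_iff]
  exact fun j => leadingCoeff_pow_succ_mul_coeff_mem hS f g (Nat.le_add_left _ _)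

theorem contentIdeal_eraseLead_mul_le (hS : ∀ I : Ideal S, I.IsSubtractive_s14) (f g : S[X]) :
    (f.eraseLead * g).contentIdeal ≤
      (f * g).contentIdeal + span {f.leadingCoeff} * g.contentIdeal := by
  have h := contentIdeal_le_of_isSubtractive
    (p := f.eraseLead * g) (q := monomial f.natDegree f.leadingCoeff * g) (hS _)
  rw [← add_mul, eraseLead_add_monomial_natDegree_leadingCoeff] at h
  refine h.trans (add_le_add_right ?_ _)
  rw [← contentIdeal_monomial f.natDegree]
  exact contentIdeal_mul_le_mul_contentIdeal _ _

theorem exists_contentIdeal_pow_succ_mul_le (hS : ∀ I : Ideal S, I.IsSubtractive_s14) (f g : S[X]) :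
    ∃ m, f.contentIdeal ^ (m + 1) * g.contentIdeal ≤
      f.contentIdeal ^ m * (f * g).contentIdeal := by
  induction h : f.support.card generalizing f with
  | zero => exact ⟨0, by simp [card_support_eq_zero.mp h]⟩
  | succ c ih =>
    obtain ⟨k, hk⟩ := ih f.eraseLead (card_support_eraseLead' h)
    have hA := span_leadingCoeff_pow_mul_contentIdeal_le hS f g
    rw [contentIdeal_eq_span_leadingCoeff_add f] at hA ⊢
    exact ⟨_, add_pow_add_one_mul_le hA hk (contentIdeal_eraseLead_mul_le hS f g)⟩

end Polynomial

theorem polyContent_eq_contentIdeal {S : Type*} [CommSemiring S] (f : Polynomial S) :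
    polyContent f = f.contentIdeal :=
  le_antisymm (Ideal.span_le.mpr <| Set.range_subset_iff.mpr f.coeff_mem_contentIdeal)
    (Polynomial.contentIdeal_le_iff.mpr fun n => Ideal.subset_span ⟨n, rfl⟩)

/-- If every ideal of the commutative semiring `S` is subtractive, then the
Dedekind–Mertens content formula holds in `S[X]`. -/
theorem dedekindMertens_of_subtractive {S : Type*} [CommSemiring S]
    (hsub : ∀ I : Ideal S, ∀ a b : S, a + b ∈ I → a ∈ I → b ∈ I) :
    ∀ f g : Polynomial S, ∃ m : ℕ,
      polyContent f ^ (m + 1) * polyContent g = polyContent f ^ m * polyContent (f * g) := by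
  intro f g
  simp only [polyContent_eq_contentIdeal]
  obtain ⟨m, hm⟩ := Polynomial.exists_contentIdeal_pow_succ_mul_le hsub f g
  refine ⟨m, hm.antisymm ?_⟩
  calc f.contentIdeal ^ m * (f * g).contentIdeal
      ≤ f.contentIdeal ^ m * (f.contentIdeal * g.contentIdeal) :=
        Ideal.mul_mono_right (Polynomial.contentIdeal_mul_le_mul_contentIdeal f g)
    _ = f.contentIdeal ^ (m + 1) * g.contentIdeal := by ring
end
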